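/- For every complex z with |z| < π/2 and real m₁ ∈ [0,1], with u = |z|: sn(u, m₁)/cn(u, m₁) ≤ tan u, 1/cn(u, m₁) ≤ 1/cos u, and dn(u, m₁)/cn(u, m₁) ≤ 1/cos u, where sn, cn, dn have parameter m₁ and 0 ≤ u < π/2. -/

import Mathlib

noncomputable section

/-- The incomplete elliptic integral of the first kind (in Jacobi form). -/
def ellF (m x : ℝ) : ℝ := ∫ t in (0:ℝ)..x, 1 / Real.sqrt ((1 - t ^ 2) * (1 - m * t ^ 2))

/-- The Jacobi elliptic function `sn(u, m)`, the inverse of `x ↦ ellF m x`. -/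
def sn (u m : ℝ) : ℝ := Function.invFun (ellF m) u

/-- The Jacobi elliptic function `cn(u, m) = √(1 - sn(u,m)²)`. -/
def cn (u m : ℝ) : ℝ := Real.sqrt (1 - sn u m ^ 2)

/-- The Jacobi elliptic function `dn(u, m) = √(1 - m·sn(u,m)²)`. -/
def dn (u m : ℝ) : ℝ := Real.sqrt (1 - m * sn u m ^ 2)

end


/-!
Write `F = ellF m` and `a = sn u m`, so that `F a = u`. On `(-1, 1)` the integrand of `F` is even
and dominates `1 / √(1 - t²)`, the integrand of `arcsin`; hence `arcsin |a| ≤ F |a| = |F a| = u`,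
i.e. `|sn u m| ≤ sin u`. Then `cn u m ≥ cos u > 0`, while `dn u m ≤ 1`.
-/

open Real Set intervalIntegral

noncomputable def ellIntegrand (m t : ℝ) : ℝ := 1 / √((1 - t ^ 2) * (1 - m * t ^ 2))

lemma ellF_eq_integral (m x : ℝ) : ellF m x = ∫ t in (0 : ℝ)..x, ellIntegrand m t := rfl

section

variable {m t a u : ℝ}

lemma ellIntegrand_radicand_pos (hm : m ≤ 1) (ht : t ∈ Ioo (-1) 1) :
    0 < (1 - t ^ 2) * (1 - m * t ^ 2) := by
  have h₁ : 0 < 1 - t ^ 2 := by nlinarith [ht.1, ht.2]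
  have h₂ : 0 < 1 - m * t ^ 2 := by nlinarith [mul_nonneg (sub_nonneg.2 hm) (sq_nonneg t)]
  exact mul_pos h₁ h₂

lemma ellIntegrand_neg (m t : ℝ) : ellIntegrand m (-t) = ellIntegrand m t := by
  simp only [ellIntegrand, neg_sq]

lemma ellIntegrand_zero (t : ℝ) : ellIntegrand 0 t = 1 / √(1 - t ^ 2) := by
  simp only [ellIntegrand, zero_mul, sub_zero, mul_one]

lemma ellIntegrand_mono {m' : ℝ} (hm' : m' ≤ m) (hm : m ≤ 1) (ht : t ∈ Ioo (-1) 1) :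
    ellIntegrand m' t ≤ ellIntegrand m t := by
  have h : (1 - t ^ 2) * (1 - m * t ^ 2) ≤ (1 - t ^ 2) * (1 - m' * t ^ 2) := by
    have : 0 < 1 - t ^ 2 := by nlinarith [ht.1, ht.2]
    nlinarith [mul_nonneg this.le (mul_nonneg (sub_nonneg.2 hm') (sq_nonneg t))]
  exact one_div_le_one_div_of_le (sqrt_pos.2 (ellIntegrand_radicand_pos hm ht)) (sqrt_le_sqrt h)

lemma continuousOn_ellIntegrand (hm : m ≤ 1) : ContinuousOn (ellIntegrand m) (Ioo (-1) 1) :=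
  continuousOn_const.div (by fun_prop)
    fun _ ht ↦ (sqrt_pos.2 (ellIntegrand_radicand_pos hm ht)).ne'

lemma intervalIntegrable_ellIntegrand (hm : m ≤ 1) (ha : a ∈ Ioo (-1) 1) :
    IntervalIntegrable (ellIntegrand m) MeasureTheory.volume 0 a :=
  ((continuousOn_ellIntegrand hm).mono
    (ordConnected_Ioo.uIcc_subset (by norm_num) ha)).intervalIntegrable

lemma ellF_neg (m x : ℝ) : ellF m (-x) = -ellF m x := by
  calc ellF m (-x) = ∫ t in (0 : ℝ)..-x, ellIntegrand m (-t) := by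
        simp only [ellF_eq_integral, ellIntegrand_neg]
    _ = ∫ t in x..0, ellIntegrand m t := by rw [integral_comp_neg, neg_neg, neg_zero]
    _ = -ellF m x := integral_symm _ _

lemma ellF_zero (ha : a ∈ Ioo (-1) 1) : ellF 0 a = arcsin a := by
  have hderiv : ∀ t ∈ uIcc 0 a, HasDerivAt arcsin (ellIntegrand 0 t) t := fun t ht ↦ by
    obtain ⟨ht₁, ht₂⟩ := ordConnected_Ioo.uIcc_subset (by norm_num) ha ht
    rw [ellIntegrand_zero]
    exact hasDerivAt_arcsin ht₁.ne' ht₂.ne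
  rw [ellF_eq_integral, integral_eq_sub_of_hasDerivAt hderiv
    (intervalIntegrable_ellIntegrand zero_le_one ha), arcsin_zero, sub_zero]

lemma arcsin_le_ellF (hm₀ : 0 ≤ m) (hm₁ : m ≤ 1) (ha₀ : 0 ≤ a) (ha₁ : a < 1) :
    arcsin a ≤ ellF m a := by
  have ha : a ∈ Ioo (-1) 1 := ⟨by linarith, ha₁⟩
  rw [← ellF_zero ha, ellF_eq_integral, ellF_eq_integral]
  refine integral_mono_on ha₀ (intervalIntegrable_ellIntegrand zero_le_one ha)
    (intervalIntegrable_ellIntegrand hm₁ ha) fun t ht ↦ ellIntegrand_mono hm₀ hm₁ ?_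
  exact ⟨by linarith [ht.1], ht.2.trans_lt ha₁⟩

lemma arcsin_abs_le_abs_ellF (hm₀ : 0 ≤ m) (hm₁ : m ≤ 1) (ha : |a| < 1) :
    arcsin |a| ≤ |ellF m a| := by
  refine (arcsin_le_ellF hm₀ hm₁ (abs_nonneg a) ha).trans ?_
  rcases abs_choice a with h | h <;> rw [h]
  · exact le_abs_self _
  · exact (ellF_neg m a).trans_le (neg_le_abs _)

lemma exists_ellF_eq (hm₀ : 0 ≤ m) (hm₁ : m ≤ 1) (hu : u ∈ Ico 0 (π / 2)) :
    ∃ x, ellF m x = u := by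
  have hsin₀ : 0 ≤ sin u := sin_nonneg_of_nonneg_of_le_pi hu.1 (by linarith [hu.2, pi_pos])
  have hsin₁ : sin u < 1 := by
    simpa using sin_lt_sin_of_lt_of_le_pi_div_two (by linarith [hu.1, pi_pos]) le_rfl hu.2
  have hcont : ContinuousOn (ellF m) (Icc 0 (sin u)) := by
    have h := continuousOn_primitive_interval'
      (intervalIntegrable_ellIntegrand hm₁ ⟨by linarith, hsin₁⟩) left_mem_uIcc
    rwa [uIcc_of_le hsin₀] at h
  have hlow : ellF m 0 ≤ u := by simpa [ellF_eq_integral] using hu.1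
  have hhigh : u ≤ ellF m (sin u) := by
    simpa [arcsin_sin (by linarith [hu.1, pi_pos]) hu.2.le]
      using arcsin_le_ellF hm₀ hm₁ hsin₀ hsin₁
  obtain ⟨x, -, hx⟩ := intermediate_value_Icc hsin₀ hcont ⟨hlow, hhigh⟩
  exact ⟨x, hx⟩

lemma ellF_sn (hm₀ : 0 ≤ m) (hm₁ : m ≤ 1) (hu : u ∈ Ico 0 (π / 2)) : ellF m (sn u m) = u :=
  Function.invFun_eq (exists_ellF_eq hm₀ hm₁ hu)

lemma abs_sn_le_sin (hm₀ : 0 ≤ m) (hm₁ : m ≤ 1) (hu : u ∈ Ico 0 (π / 2)) (hsn : |sn u m| < 1) :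
    |sn u m| ≤ sin u := by
  refine (arcsin_le_iff_le_sin' ⟨by linarith [hu.1, pi_pos], hu.2⟩).1 ?_
  simpa [ellF_sn hm₀ hm₁ hu, abs_of_nonneg hu.1] using arcsin_abs_le_abs_ellF hm₀ hm₁ hsn

lemma cos_le_cn (hm₀ : 0 ≤ m) (hm₁ : m ≤ 1) (hu : u ∈ Ico 0 (π / 2)) (hsn : |sn u m| < 1) :
    cos u ≤ cn u m := by
  rw [cn, cos_eq_sqrt_one_sub_sin_sq (by linarith [hu.1, pi_pos]) hu.2.le]
  have := abs_sn_le_sin hm₀ hm₁ hu hsn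
  exact sqrt_le_sqrt (by nlinarith [sq_abs (sn u m), abs_nonneg (sn u m)])

lemma cn_eq_zero_of_one_le_abs_sn (hsn : 1 ≤ |sn u m|) : cn u m = 0 :=
  sqrt_eq_zero'.2 (by nlinarith [sq_abs (sn u m)])

lemma dn_le_one (hm : 0 ≤ m) : dn u m ≤ 1 :=
  sqrt_le_one.2 (sub_le_self _ (mul_nonneg hm (sq_nonneg _)))

end

/-- For any complex `z` with `|z| < π/2` and `m₁ ∈ [0,1]`, with `u = |z|`:
`sn(u,m₁)/cn(u,m₁) ≤ tan u`, `1/cn(u,m₁) ≤ 1/cos u`, and `dn(u,m₁)/cn(u,m₁) ≤ 1/cos u`. -/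
theorem jacobi_bounds_at_abs (z : ℂ) (hz : ‖z‖ < Real.pi / 2)
    (m₁ : ℝ) (hm₁ : m₁ ∈ Set.Icc (0:ℝ) 1) :
    sn (‖z‖) m₁ / cn (‖z‖) m₁ ≤ Real.tan (‖z‖) ∧
      1 / cn (‖z‖) m₁ ≤ 1 / Real.cos (‖z‖) ∧
      dn (‖z‖) m₁ / cn (‖z‖) m₁ ≤ 1 / Real.cos (‖z‖) := by
  obtain ⟨hm₀, hm₁⟩ := hm₁
  have hu : ‖z‖ ∈ Ico 0 (π / 2) := ⟨norm_nonneg z, hz⟩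
  have hcos : 0 < cos ‖z‖ := cos_pos_of_mem_Ioo ⟨by linarith [pi_pos, hu.1], hz⟩
  -- `invFun` may pick a preimage outside `(-1, 1)`, where the integrand is junk; then `cn = 0`.
  rcases le_or_gt 1 |sn ‖z‖ m₁| with hsn | hsn
  · simp only [cn_eq_zero_of_one_le_abs_sn hsn, div_zero]
    exact ⟨tan_nonneg_of_nonneg_of_le_pi_div_two hu.1 hz.le, by positivity, by positivity⟩
  have hcn := cos_le_cn hm₀ hm₁ hu hsn
  have hsin := abs_sn_le_sin hm₀ hm₁ hu hsn
  refine ⟨?_, one_div_le_one_div_of_le hcos hcn, div_le_div₀ zero_le_one (dn_le_one hm₀) hcos hcn⟩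
  rw [tan_eq_sin_div_cos]
  exact div_le_div₀ ((abs_nonneg _).trans hsin) ((le_abs_self _).trans hsin) hcos hcn
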